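/- Let c : ℝ → ℝ be measurable and 1-periodic with 0 < λ ≤ c(y) ≤ Λ for all y. Suppose p : ℝ → ℝ is 1-periodic, integrable on [0,1], nonnegative almost everywhere, with ∫₀¹ p(y) dy = 1 and ∫₀¹ c(y) p(y) φ''(y) dy = 0 for every C², 1-periodic φ : ℝ → ℝ. Then p(y) = HM(c)/c(y) for almost every y; in particular the invariant probability density for the one-dimensional operator with coefficient c is unique. -/

import Mathlib

/-!
Every continuous 1-periodic `h` with mean zero is `φ''` for a 1-periodic `C²` function `φ`
(integrate twice, subtracting a mean in between), so `c p` is orthogonal on `(0,1)` to all such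
`h`. Testing against `ψ ∘ fract - ∫ ψ` for smooth `ψ` supported in `(0,1)` shows that `c p - K`,
with `K = ∫₀¹ c p`, vanishes as a distribution on `(0,1)`, hence `c p = K` a.e. there.
Normalisation of `p` forces `K = HM c`, and periodicity carries the identity from `(0,1]` to all
of `ℝ`.
-/

open MeasureTheory

/-- Harmonic mean of a 1-periodic function over one period:
`HM(b) = (∫₀¹ 1/b(y) dy)⁻¹`. -/
noncomputable def HM (b : ℝ → ℝ) : ℝ := (∫ y in (0:ℝ)..1, (b y)⁻¹)⁻¹

open Set Function

lemma contDiff_succ_primitive {f : ℝ → ℝ} {n : ℕ} (hf : ContDiff ℝ n f) :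
    ContDiff ℝ (n + 1) (fun y => ∫ x in 0..y, f x) :=
  contDiff_succ_iff_deriv.2
    ⟨fun y => (hf.continuous.integral_hasStrictDerivAt 0 y).hasDerivAt.differentiableAt, by simp,
      by rwa [funext (Continuous.deriv_integral _ hf.continuous 0)]⟩

lemma Function.Periodic.primitive_periodic {f : ℝ → ℝ} {T : ℝ} (hf : Periodic f T)
    (hint : ∀ a b, IntervalIntegrable f volume a b) (hmean : ∫ x in 0..T, f x = 0) :
    Periodic (fun y => ∫ x in 0..y, f x) T := fun y => by
  simpa [hmean] using hf.intervalIntegral_add_eq_add 0 y hint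

lemma Function.Periodic.exists_periodic_contDiff_two_deriv_deriv_eq {h : ℝ → ℝ} {T : ℝ}
    (hper : Periodic h T) (hcont : Continuous h) (hmean : ∫ x in 0..T, h x = 0) :
    ∃ φ : ℝ → ℝ, ContDiff ℝ 2 φ ∧ Periodic φ T ∧ deriv (deriv φ) = h := by
  set H : ℝ → ℝ := fun y => ∫ x in 0..y, h x
  have hH : ContDiff ℝ 1 H := by
    simpa using contDiff_succ_primitive (n := 0) (contDiff_zero.2 hcont)
  have hHper : Periodic H T :=
    hper.primitive_periodic (fun _ _ => hcont.intervalIntegrable _ _) hmean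
  set m := (∫ x in 0..T, H x) / T
  have hHm : ∫ x in 0..T, (H x - m) = 0 := by
    rcases eq_or_ne T 0 with rfl | hT
    · simp
    · rw [intervalIntegral.integral_sub (hH.continuous.intervalIntegrable _ _)
        intervalIntegrable_const, intervalIntegral.integral_const, smul_eq_mul, sub_zero,
        mul_div_cancel₀ _ hT, sub_self]
  have hHm_cont : Continuous fun x => H x - m := hH.continuous.sub continuous_const
  refine ⟨fun y => ∫ x in 0..y, (H x - m), ?_, ?_, ?_⟩
  · exact contDiff_succ_primitive (n := 1) (hH.sub contDiff_const)
  · exact Periodic.primitive_periodic (fun x => by simp only [hHper x])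
      (fun _ _ => hHm_cont.intervalIntegrable _ _) hHm
  · funext y
    rw [funext (Continuous.deriv_integral _ hHm_cont 0), deriv_sub_const]
    exact Continuous.deriv_integral _ hcont 0 y

lemma integral_mul_eq_mul_integral_of_orthogonal_periodic {g ψ : ℝ → ℝ}
    (hg : IntegrableOn g (Ioo 0 1))
    (horth : ∀ h : ℝ → ℝ, Continuous h → Periodic h 1 → ∫ x in 0..1, h x = 0 →
      ∫ x in 0..1, g x * h x = 0)
    (hψ : ContinuousOn ψ (Icc 0 1)) (hψ01 : ψ 0 = ψ 1) :
    ∫ x in Ioo 0 1, ψ x * g x = (∫ x in Ioo 0 1, ψ x) * ∫ x in Ioo 0 1, g x := by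
  set r := ∫ x in Ioo 0 1, ψ x
  set ψ' : ℝ → ℝ := fun x => ψ (Int.fract x)
  have hcont : Continuous ψ' := hψ.comp_fract'' hψ01
  have heq : EqOn ψ' ψ (Ioo 0 1) := fun x hx => by
    simp only [ψ', Int.fract_eq_self.2 ⟨hx.1.le, hx.2⟩]
  have hmean : ∫ x in 0..1, (ψ' x - r) = 0 := by
    rw [intervalIntegral.integral_sub (hcont.intervalIntegrable _ _) intervalIntegrable_const,
      intervalIntegral.integral_of_le zero_le_one, integral_Ioc_eq_integral_Ioo,
      setIntegral_congr_fun measurableSet_Ioo heq]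
    simp [r]
  have horth' := horth (fun x => ψ' x - r) (hcont.sub continuous_const)
    (fun x => by simp only [ψ', Int.fract_add_one]) hmean
  rw [intervalIntegral.integral_of_le zero_le_one, integral_Ioc_eq_integral_Ioo,
    setIntegral_congr_fun measurableSet_Ioo (fun x hx => by rw [heq hx])] at horth'
  have hgψ : IntegrableOn (fun x => g x * ψ x) (Ioo 0 1) :=
    hg.mul_continuousOn_of_subset hψ measurableSet_Ioo isCompact_Icc Ioo_subset_Icc_self
  simp only [mul_sub] at horth'
  rw [integral_sub hgψ (hg.mul_const r), integral_mul_const] at horth'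
  simp only [mul_comm (g _)] at horth'
  linarith

lemma ae_eq_setIntegral_of_orthogonal_periodic {g : ℝ → ℝ} (hg : IntegrableOn g (Ioo 0 1))
    (horth : ∀ h : ℝ → ℝ, Continuous h → Periodic h 1 → ∫ x in 0..1, h x = 0 →
      ∫ x in 0..1, g x * h x = 0) :
    g =ᵐ[volume.restrict (Ioo 0 1)] fun _ => ∫ x in Ioo 0 1, g x := by
  set K := ∫ x in Ioo 0 1, g x
  suffices h : ∀ᵐ x, x ∈ Ioo (0 : ℝ) 1 → g x - K = 0 by
    filter_upwards [(ae_restrict_iff' measurableSet_Ioo).2 h] with x hx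
    exact sub_eq_zero.1 hx
  refine isOpen_Ioo.ae_eq_zero_of_integral_contDiff_smul_eq_zero
    (hg.sub (integrableOn_const measure_Ioo_lt_top.ne)).locallyIntegrableOn
    fun ψ hψ _ hsupp => ?_
  have hvanish : ∀ x ∉ Ioo (0 : ℝ) 1, ψ x = 0 :=
    fun x hx => image_eq_zero_of_notMem_tsupport fun h => hx (hsupp h)
  rw [← setIntegral_eq_integral_of_forall_compl_eq_zero fun x hx => by
    rw [hvanish x hx, zero_smul]]
  simp only [smul_eq_mul, mul_sub]
  have hψg : IntegrableOn (fun x => ψ x * g x) (Ioo 0 1) :=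
    hg.continuousOn_mul_of_subset hψ.continuous.continuousOn isCompact_Icc measurableSet_Ioo
      Ioo_subset_Icc_self
  have hψ_int : IntegrableOn ψ (Ioo 0 1) :=
    hψ.continuous.integrableOn_Icc.mono_set Ioo_subset_Icc_self
  rw [integral_sub hψg (hψ_int.mul_const K), integral_mul_const,
    integral_mul_eq_mul_integral_of_orthogonal_periodic hg horth hψ.continuous.continuousOn
      (by rw [hvanish 0 (by simp), hvanish 1 (by simp)]), sub_self]

lemma eq_HM_of_ae_eq_div {p c : ℝ → ℝ} {K : ℝ}
    (hpc : p =ᵐ[volume.restrict (Ioo 0 1)] fun y => K / c y) (hp1 : ∫ y in 0..1, p y = 1) :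
    K = HM c := by
  have hp : ∫ y in 0..1, p y = ∫ y in 0..1, K * (c y)⁻¹ := by
    simp only [intervalIntegral.integral_of_le zero_le_one, integral_Ioc_eq_integral_Ioo]
    exact integral_congr_ae (hpc.mono fun y hy => hy.trans (div_eq_mul_inv _ _))
  refine eq_inv_of_mul_eq_one_left ?_
  rw [← intervalIntegral.integral_const_mul, ← hp, hp1]

lemma Function.Periodic.ae_eq_of_ae_eq_restrict_Ioc {f g : ℝ → ℝ} {T : ℝ} (hf : Periodic f T)
    (hg : Periodic g T) (hT : 0 < T) (h : f =ᵐ[volume.restrict (Ioc 0 T)] g) :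
    f =ᵐ[volume] g := by
  have hdom := isAddFundamentalDomain_Ioc hT 0
  rw [zero_add] at hdom
  rw [Filter.EventuallyEq, ae_iff] at h ⊢
  refine hdom.measure_zero_of_invariant _ (fun n => ?_) ?_
  · ext x
    simp [mem_vadd_set_iff_neg_vadd_mem, hf.map_vadd_zmultiples, hg.map_vadd_zmultiples]
  · rwa [Measure.restrict_apply' measurableSet_Ioc] at h

theorem stmt_6_general (c : ℝ → ℝ) (hcmeas : Measurable c)
    (hcper : ∀ y, c (y + 1) = c y)
    (lam Lam : ℝ) (hlam : 0 < lam)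
    (hell : ∀ y, lam ≤ c y ∧ c y ≤ Lam)
    (p : ℝ → ℝ) (hpper : ∀ y, p (y + 1) = p y)
    (hpint : IntegrableOn p (Set.Icc (0:ℝ) 1))
    (hpone : ∫ y in (0:ℝ)..1, p y = 1)
    (hpinv : ∀ φ : ℝ → ℝ, ContDiff ℝ 2 φ → (∀ y, φ (y + 1) = φ y) →
      ∫ y in (0:ℝ)..1, c y * p y * deriv (deriv φ) y = 0) :
    ∀ᵐ y ∂(volume : Measure ℝ), p y = HM c / c y := by
  have hcpos : ∀ y, 0 < c y := fun y => hlam.trans_le (hell y).1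
  have hcp : IntegrableOn (fun y => c y * p y) (Ioo 0 1) :=
    (hpint.mono_set Ioo_subset_Icc_self).bdd_mul hcmeas.aestronglyMeasurable
      (ae_of_all _ fun y => by rw [Real.norm_eq_abs, abs_of_pos (hcpos y)]; exact (hell y).2)
  have horth : ∀ h : ℝ → ℝ, Continuous h → Periodic h 1 → ∫ x in 0..1, h x = 0 →
      ∫ x in 0..1, c x * p x * h x = 0 := fun h hcont hper hmean => by
    obtain ⟨φ, hφ, hφper, hφ''⟩ := hper.exists_periodic_contDiff_two_deriv_deriv_eq hcont hmean
    simpa [hφ''] using hpinv φ hφ hφper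
  have hpK : p =ᵐ[volume.restrict (Ioo 0 1)] fun y => (∫ x in Ioo 0 1, c x * p x) / c y := by
    filter_upwards [ae_eq_setIntegral_of_orthogonal_periodic hcp horth] with y hy
    rw [eq_div_iff (hcpos y).ne', mul_comm, hy]
  refine Periodic.ae_eq_of_ae_eq_restrict_Ioc hpper (fun y => by simp only [hcper y]) one_pos ?_
  rw [← Measure.restrict_congr_set Ioo_ae_eq_Ioc, ← eq_HM_of_ae_eq_div hpK hpone]
  exact hpK

/-- Uniqueness of the invariant probability density for the one-dimensional operator with
coefficient `c`: any 1-periodic probability density `p` with `∫₀¹ c p φ'' = 0` for all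
1-periodic C² test functions `φ` equals `HM(c)/c` almost everywhere. -/
theorem stmt_6 (c : ℝ → ℝ) (hcmeas : Measurable c)
    (hcper : ∀ y, c (y + 1) = c y)
    (lam Lam : ℝ) (hlam : 0 < lam)
    (hell : ∀ y, lam ≤ c y ∧ c y ≤ Lam)
    (p : ℝ → ℝ) (hpper : ∀ y, p (y + 1) = p y)
    (hpint : IntegrableOn p (Set.Icc (0:ℝ) 1))
    (hpnonneg : ∀ᵐ y ∂(volume : Measure ℝ), 0 ≤ p y)
    (hpone : ∫ y in (0:ℝ)..1, p y = 1)
    (hpinv : ∀ φ : ℝ → ℝ, ContDiff ℝ 2 φ → (∀ y, φ (y + 1) = φ y) →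
      ∫ y in (0:ℝ)..1, c y * p y * deriv (deriv φ) y = 0) :
    ∀ᵐ y ∂(volume : Measure ℝ), p y = HM c / c y :=
  stmt_6_general c hcmeas hcper lam Lam hlam hell p hpper hpint hpone hpinv
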